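/- Let X₁,…,X_p, C and R′ be random variables with finitely many values on a finite probability space such that R′ is independent of the tuple (X₁,…,X_p,C), and let C′ = g(X₁, C, R′) for some function g. Then I(X₁:⋯:X_p | (C, C′)) ≤ I(X₁:⋯:X_p | C). -/

import Mathlib

open scoped BigOperators

noncomputable section

/-- Base-2 Shannon entropy of a finitely supported (sub)probability vector. -/
def shannonH {V : Type} [Fintype V] (q : V → ℝ) : ℝ :=
  -∑ a, q a * Real.logb 2 (q a)

/-- Distribution (probability mass function) of a random variable `X` on a finite
probability space with probability mass function `μ`. -/
def pdist {Ω V : Type} [Fintype Ω] [DecidableEq V] (μ : Ω → ℝ) (X : Ω → V) : V → ℝ :=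
  fun a => ∑ ω, if X ω = a then μ ω else 0

/-- Shannon entropy `H(X)` of a random variable. -/
def entH {Ω V : Type} [Fintype Ω] [Fintype V] [DecidableEq V] (μ : Ω → ℝ) (X : Ω → V) : ℝ :=
  shannonH (pdist μ X)

/-- Conditional entropy `H(X|Y) = H(X,Y) − H(Y)`. -/
def condH {Ω V W : Type} [Fintype Ω] [Fintype V] [DecidableEq V] [Fintype W] [DecidableEq W]
    (μ : Ω → ℝ) (X : Ω → V) (Y : Ω → W) : ℝ :=
  entH μ (fun ω => (X ω, Y ω)) - entH μ Y

/-- Mutual information `I(X:Y) = H(X) + H(Y) − H(X,Y)`. -/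
def mutualI {Ω V W : Type} [Fintype Ω] [Fintype V] [DecidableEq V] [Fintype W] [DecidableEq W]
    (μ : Ω → ℝ) (X : Ω → V) (Y : Ω → W) : ℝ :=
  entH μ X + entH μ Y - entH μ (fun ω => (X ω, Y ω))

/-- Total correlation `I(X₁:⋯:X_p) = Σᵢ H(Xᵢ) − H(X₁,…,X_p)`. -/
def totCorr {Ω : Type} [Fintype Ω] {p : ℕ} {V : Fin p → Type}
    [∀ i, Fintype (V i)] [∀ i, DecidableEq (V i)]
    (μ : Ω → ℝ) (X : ∀ i, Ω → V i) : ℝ :=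
  (∑ i, entH μ (X i)) - entH μ (fun ω => (fun i => X i ω))

/-- Conditional total correlation `I(X₁:⋯:X_p|C) = Σᵢ H(Xᵢ|C) − H(X₁,…,X_p|C)`. -/
def condTotCorr {Ω : Type} [Fintype Ω] {p : ℕ} {V : Fin p → Type}
    [∀ i, Fintype (V i)] [∀ i, DecidableEq (V i)] {W : Type} [Fintype W] [DecidableEq W]
    (μ : Ω → ℝ) (X : ∀ i, Ω → V i) (C : Ω → W) : ℝ :=
  (∑ i, condH μ (X i) C) - condH μ (fun ω => (fun i => X i ω)) C

/-!
Writing `I(A : D | C)` for conditional mutual information, the claim reads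
`Σᵢ I(Xᵢ : C′ | C) ≥ I(X : C′ | C)`, where `X = (X₁, …, X_p)`. Because `C′` is a function of
`(X₁, C)` and of a variable independent of everything else, `X — (X₁, C) — C′` is a Markov
chain, so `I(X : C′ | C) = I(X₁ : C′ | C)`, the first term of a sum of nonnegative terms.
Nonnegativity of conditional mutual information is submodularity of entropy, which follows
from Gibbs' inequality, i.e. from `log x ≤ x - 1`.
-/

namespace FiniteEntropy

open Finset Real

variable {Ω : Type} [Fintype Ω] (μ : Ω → ℝ)

section Distribution

variable {α β : Type} [DecidableEq α]

lemma pdist_nonneg (hμ0 : ∀ ω, 0 ≤ μ ω) (Y : Ω → α) (a : α) : 0 ≤ pdist μ Y a :=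
  sum_nonneg fun ω _ => by split_ifs <;> simp [hμ0 ω]

lemma pdist_apply_pos (hμ0 : ∀ ω, 0 ≤ μ ω) (Y : Ω → α) {ω : Ω} (hω : 0 < μ ω) :
    0 < pdist μ Y (Y ω) :=
  hω.trans_le <| by
    simpa [pdist] using single_le_sum (f := fun ω' => if Y ω' = Y ω then μ ω' else 0)
      (fun ω' _ => by split_ifs <;> simp [hμ0 ω']) (mem_univ ω)

lemma sum_mul_comp_eq_sum_pdist_mul [Fintype α] (Y : Ω → α) (f : α → ℝ) :
    ∑ ω, μ ω * f (Y ω) = ∑ a, pdist μ Y a * f a := by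
  simp only [pdist, sum_mul, ite_mul, zero_mul]
  rw [sum_comm]
  simp

lemma sum_pdist [Fintype α] (hμ1 : ∑ ω, μ ω = 1) (Y : Ω → α) : ∑ a, pdist μ Y a = 1 := by
  simpa [hμ1] using (sum_mul_comp_eq_sum_pdist_mul μ Y fun _ => 1).symm

lemma pdist_comp [Fintype α] [DecidableEq β] (Y : Ω → α) (φ : α → β) (b : β) :
    pdist μ (fun ω => φ (Y ω)) b = ∑ a, if φ a = b then pdist μ Y a else 0 := by
  simpa [pdist, mul_ite] using sum_mul_comp_eq_sum_pdist_mul μ Y fun a => if φ a = b then 1 else 0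

lemma sum_pdist_pair_left [Fintype α] [DecidableEq β] (A : Ω → α) (Z : Ω → β) (z : β) :
    ∑ a, pdist μ (fun ω => (A ω, Z ω)) (a, z) = pdist μ Z z := by
  simp only [pdist, Prod.ext_iff]
  rw [sum_comm]
  refine sum_congr rfl fun ω _ => ?_
  by_cases h : Z ω = z <;> simp [h]

lemma sum_pdist_pair_right [DecidableEq β] [Fintype β] (Z : Ω → α) (B : Ω → β) (z : α) :
    ∑ b, pdist μ (fun ω => (Z ω, B ω)) (z, b) = pdist μ Z z := by
  simp only [pdist, Prod.ext_iff]
  rw [sum_comm]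
  refine sum_congr rfl fun ω _ => ?_
  by_cases h : Z ω = z <;> simp [h]

end Distribution

section Entropy

variable {α β : Type} [Fintype α] [DecidableEq α]

lemma entH_eq_neg_sum (Y : Ω → α) :
    entH μ Y = -∑ ω, μ ω * logb 2 (pdist μ Y (Y ω)) := by
  rw [entH, shannonH, sum_mul_comp_eq_sum_pdist_mul μ Y fun a => logb 2 (pdist μ Y a)]

lemma entH_comp_of_injective [Fintype β] [DecidableEq β] (Y : Ω → α) {φ : α → β}
    (hφ : Function.Injective φ) : entH μ (fun ω => φ (Y ω)) = entH μ Y := by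
  simp only [entH_eq_neg_sum, pdist, hφ.eq_iff]

lemma sum_mul_logb_nonpos (hμ0 : ∀ ω, 0 ≤ μ ω) (hμ1 : ∑ ω, μ ω = 1) {F : Ω → ℝ}
    (hF : ∀ ω, 0 < μ ω → 0 < F ω) (hsum : ∑ ω, μ ω * F ω ≤ 1) :
    ∑ ω, μ ω * logb 2 (F ω) ≤ 0 := by
  have hterm : ∀ ω, μ ω * log (F ω) ≤ μ ω * F ω - μ ω := fun ω => by
    rcases (hμ0 ω).eq_or_lt with hω | hω
    · simp [← hω]
    · nlinarith [log_le_sub_one_of_pos (hF ω hω)]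
  have hlog : ∑ ω, μ ω * log (F ω) ≤ 0 := by
    calc ∑ ω, μ ω * log (F ω) ≤ ∑ ω, (μ ω * F ω - μ ω) := sum_le_sum fun ω _ => hterm ω
      _ ≤ 0 := by rw [sum_sub_distrib, hμ1]; linarith
  simp only [logb, mul_div_assoc', ← sum_div]
  exact div_nonpos_of_nonpos_of_nonneg hlog (log_nonneg one_le_two)

end Entropy

section Submodularity

variable {α β γ : Type} [Fintype α] [DecidableEq α] [Fintype β] [DecidableEq β]
  [Fintype γ] [DecidableEq γ]

lemma sum_pdist_mul_pdist_div_pdist (hμ1 : ∑ ω, μ ω = 1)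
    (A : Ω → α) (Z : Ω → β) (B : Ω → γ) :
    ∑ t : α × β × γ, pdist μ (fun ω => (A ω, Z ω)) (t.1, t.2.1)
      * pdist μ (fun ω => (Z ω, B ω)) t.2 / pdist μ Z t.2.1 = 1 := by
  calc _ = ∑ z, (∑ a, pdist μ (fun ω => (A ω, Z ω)) (a, z))
          * (∑ b, pdist μ (fun ω => (Z ω, B ω)) (z, b)) / pdist μ Z z := by
        simp only [Fintype.sum_prod_type, sum_mul_sum, sum_div]
        rw [sum_comm]
    _ = ∑ z, pdist μ Z z := by
        simp only [sum_pdist_pair_left, sum_pdist_pair_right, mul_self_div_self]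
    _ = 1 := sum_pdist μ hμ1 Z

/-- `I(A : B | Z) ≥ 0`. -/
lemma entH_triple_add_entH_le (hμ0 : ∀ ω, 0 ≤ μ ω) (hμ1 : ∑ ω, μ ω = 1)
    (A : Ω → α) (Z : Ω → β) (B : Ω → γ) :
    entH μ (fun ω => (A ω, (Z ω, B ω))) + entH μ Z ≤
      entH μ (fun ω => (A ω, Z ω)) + entH μ (fun ω => (Z ω, B ω)) := by
  set T : Ω → α × β × γ := fun ω => (A ω, (Z ω, B ω))
  -- Gibbs' inequality for the joint law of `T` against `P(a,z) P(z,b) / P(z)`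
  set F : α × β × γ → ℝ := fun t => pdist μ (fun ω => (A ω, Z ω)) (t.1, t.2.1)
    * pdist μ (fun ω => (Z ω, B ω)) t.2 / (pdist μ T t * pdist μ Z t.2.1)
  have hpos : ∀ ω, 0 < μ ω → 0 < pdist μ (fun ω => (A ω, Z ω)) (A ω, Z ω) ∧
      0 < pdist μ (fun ω => (Z ω, B ω)) (Z ω, B ω) ∧ 0 < pdist μ T (T ω) ∧
      0 < pdist μ Z (Z ω) := fun ω hω =>
    ⟨pdist_apply_pos μ hμ0 _ hω, pdist_apply_pos μ hμ0 _ hω, pdist_apply_pos μ hμ0 _ hω,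
      pdist_apply_pos μ hμ0 _ hω⟩
  have hF : ∀ ω, 0 < μ ω → 0 < F (T ω) := fun ω hω => by
    obtain ⟨hAZ, hZB, hT, hZ⟩ := hpos ω hω
    exact div_pos (mul_pos hAZ hZB) (mul_pos hT hZ)
  have hsum : ∑ ω, μ ω * F (T ω) ≤ 1 := by
    rw [sum_mul_comp_eq_sum_pdist_mul, ← sum_pdist_mul_pdist_div_pdist μ hμ1 A Z B]
    refine sum_le_sum fun t _ => ?_
    rcases (pdist_nonneg μ hμ0 T t).eq_or_lt with ht | ht
    · rw [← ht, zero_mul]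
      exact div_nonneg (mul_nonneg (pdist_nonneg μ hμ0 _ _) (pdist_nonneg μ hμ0 _ _))
        (pdist_nonneg μ hμ0 _ _)
    · rw [mul_div_assoc', mul_div_mul_left _ _ ht.ne']
  have hlogF : ∀ ω, μ ω * logb 2 (F (T ω))
      = μ ω * logb 2 (pdist μ (fun ω => (A ω, Z ω)) (A ω, Z ω))
      + μ ω * logb 2 (pdist μ (fun ω => (Z ω, B ω)) (Z ω, B ω))
      - μ ω * logb 2 (pdist μ T (T ω)) - μ ω * logb 2 (pdist μ Z (Z ω)) := fun ω => by
    rcases (hμ0 ω).eq_or_lt with hω | hω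
    · simp [← hω]
    obtain ⟨hAZ, hZB, hT, hZ⟩ := hpos ω hω
    dsimp only [F, T]
    rw [logb_div (mul_pos hAZ hZB).ne' (mul_pos hT hZ).ne', logb_mul hAZ.ne' hZB.ne',
      logb_mul hT.ne' hZ.ne']
    ring
  have := sum_mul_logb_nonpos μ hμ0 hμ1 hF hsum
  simp only [hlogF, sum_sub_distrib, sum_add_distrib] at this
  simp only [entH_eq_neg_sum]
  linarith

end Submodularity

section Conditional

variable {α β γ : Type} [Fintype α] [DecidableEq α] [Fintype β] [DecidableEq β]
  [Fintype γ] [DecidableEq γ]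

lemma condH_pair_le (hμ0 : ∀ ω, 0 ≤ μ ω) (hμ1 : ∑ ω, μ ω = 1)
    (A : Ω → α) (C : Ω → β) (D : Ω → γ) :
    condH μ A (fun ω => (C ω, D ω)) ≤ condH μ A C := by
  have := entH_triple_add_entH_le μ hμ0 hμ1 A C D
  unfold condH
  linarith

/-- Both sides are `-I(A : D | C)`. -/
lemma condH_pair_sub_condH_symm (A : Ω → α) (C : Ω → β) (D : Ω → γ) :
    condH μ A (fun ω => (C ω, D ω)) - condH μ A C
      = condH μ D (fun ω => (A ω, C ω)) - condH μ D C := by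
  have hACD : entH μ (fun ω => (A ω, (C ω, D ω))) = entH μ (fun ω => (D ω, (A ω, C ω))) :=
    entH_comp_of_injective μ (fun ω => (D ω, (A ω, C ω)))
      ((Equiv.prodComm _ _).trans (Equiv.prodAssoc _ _ _)).injective
  have hCD : entH μ (fun ω => (C ω, D ω)) = entH μ (fun ω => (D ω, C ω)) :=
    entH_comp_of_injective μ (fun ω => (D ω, C ω)) (φ := Prod.swap) Prod.swap_injective
  unfold condH
  linarith

lemma condH_eq_of_pdist_pair_eq_mul (hμ0 : ∀ ω, 0 ≤ μ ω) (Y : Ω → α) (Z : Ω → β)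
    (κ : α → β → ℝ) (h : ∀ a b, pdist μ (fun ω => (Y ω, Z ω)) (a, b) = pdist μ Y a * κ a b) :
    condH μ Z Y = -∑ ω, μ ω * logb 2 (κ (Y ω) (Z ω)) := by
  have hswap : entH μ (fun ω => (Z ω, Y ω)) = entH μ (fun ω => (Y ω, Z ω)) :=
    entH_comp_of_injective μ (fun ω => (Y ω, Z ω)) Prod.swap_injective
  rw [condH, hswap, entH_eq_neg_sum, entH_eq_neg_sum, neg_sub_neg, ← sum_sub_distrib,
    ← sum_neg_distrib]
  refine sum_congr rfl fun ω _ => ?_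
  rcases (hμ0 ω).eq_or_lt with hω | hω
  · simp [← hω]
  have hYZ := pdist_apply_pos μ hμ0 (fun ω => (Y ω, Z ω)) hω
  have hY := pdist_apply_pos μ hμ0 Y hω
  rw [h] at hYZ ⊢
  rw [logb_mul hY.ne' (pos_of_mul_pos_right hYZ hY.le).ne']
  ring

end Conditional

section Independence

variable {α β γ : Type} [DecidableEq α] [DecidableEq β] [DecidableEq γ]

def PdistIndep (Y : Ω → α) (R : Ω → β) : Prop :=
  ∀ a b, pdist μ (fun ω => (Y ω, R ω)) (a, b) = pdist μ Y a * pdist μ R b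

variable {μ}

lemma PdistIndep.comp_left [Fintype α] [Fintype β] {Y : Ω → α} {R : Ω → β}
    (h : PdistIndep μ Y R) (φ : α → γ) : PdistIndep μ (fun ω => φ (Y ω)) R := by
  intro c r
  calc pdist μ (fun ω => (φ (Y ω), R ω)) (c, r)
      = ∑ x : α × β, if (φ x.1, x.2) = (c, r) then pdist μ (fun ω => (Y ω, R ω)) x else 0 :=
        pdist_comp μ (fun ω => (Y ω, R ω)) (fun x => (φ x.1, x.2)) (c, r)
    _ = ∑ a, if φ a = c then pdist μ Y a * pdist μ R r else 0 := by
        rw [Fintype.sum_prod_type]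
        refine sum_congr rfl fun a _ => ?_
        by_cases ha : φ a = c <;> simp [ha, h a]
    _ = pdist μ (fun ω => φ (Y ω)) c * pdist μ R r := by
        rw [pdist_comp μ Y φ c, sum_mul]
        simp only [ite_mul, zero_mul]

lemma PdistIndep.pdist_pair_apply [Fintype α] [Fintype β] {Y : Ω → α} {R : Ω → β}
    (h : PdistIndep μ Y R) (f : α → β → γ) (a : α) (c : γ) :
    pdist μ (fun ω => (Y ω, f (Y ω) (R ω))) (a, c)
      = pdist μ Y a * pdist μ (fun ω => f a (R ω)) c := by
  calc pdist μ (fun ω => (Y ω, f (Y ω) (R ω))) (a, c)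
      = ∑ x : α × β, if (x.1, f x.1 x.2) = (a, c)
          then pdist μ (fun ω => (Y ω, R ω)) x else 0 :=
        pdist_comp μ (fun ω => (Y ω, R ω)) (fun x => (x.1, f x.1 x.2)) (a, c)
    _ = ∑ b, if f a b = c then pdist μ Y a * pdist μ R b else 0 := by
        rw [Fintype.sum_prod_type, sum_eq_single a (fun a' _ ha' => by simp [ha'])
          (by simp)]
        simp [h a]
    _ = pdist μ Y a * pdist μ (fun ω => f a (R ω)) c := by
        rw [pdist_comp μ R (f a), mul_sum]
        simp only [mul_ite, mul_zero]

lemma PdistIndep.condH_eq [Fintype α] [Fintype β] [Fintype γ] (hμ0 : ∀ ω, 0 ≤ μ ω)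
    {Y : Ω → α} {R : Ω → β} (h : PdistIndep μ Y R) (f : α → β → γ) :
    condH μ (fun ω => f (Y ω) (R ω)) Y
      = -∑ ω, μ ω * logb 2 (pdist μ (fun ω' => f (Y ω) (R ω')) (f (Y ω) (R ω))) :=
  condH_eq_of_pdist_pair_eq_mul μ hμ0 Y _ (fun a c => pdist μ (fun ω => f a (R ω)) c)
    (h.pdist_pair_apply f)

end Independence

/-- `hD` says that `X — (X i₀, C) — D` is a Markov chain. -/
theorem condTotCorr_pair_le_of_condH_eq (hμ0 : ∀ ω, 0 ≤ μ ω) (hμ1 : ∑ ω, μ ω = 1)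
    {p : ℕ} {V : Fin p → Type} [∀ i, Fintype (V i)] [∀ i, DecidableEq (V i)]
    {U T : Type} [Fintype U] [DecidableEq U] [Fintype T] [DecidableEq T]
    (X : ∀ i, Ω → V i) (C : Ω → U) (D : Ω → T) (i₀ : Fin p)
    (hD : condH μ D (fun ω => ((fun i => X i ω), C ω)) = condH μ D (fun ω => (X i₀ ω, C ω))) :
    condTotCorr μ X (fun ω => (C ω, D ω)) ≤ condTotCorr μ X C := by
  have hgain : ∀ i ∈ univ, 0 ≤ condH μ (X i) C - condH μ (X i) (fun ω => (C ω, D ω)) :=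
    fun i _ => sub_nonneg.2 (condH_pair_le μ hμ0 hμ1 (X i) C D)
  have hle := single_le_sum hgain (mem_univ i₀)
  have hX := condH_pair_sub_condH_symm μ (fun ω i => X i ω) C D
  have hX₀ := condH_pair_sub_condH_symm μ (X i₀) C D
  rw [sum_sub_distrib] at hle
  unfold condTotCorr
  linarith

end FiniteEntropy

open FiniteEntropy in
/-- **Further public communication cannot increase the conditional total correlation.**
If `R′` is independent of `(X₁,…,X_p,C)` and `C′ = g(X₁, C, R′)`, then
`I(X₁:⋯:X_p | (C,C′)) ≤ I(X₁:⋯:X_p | C)`. -/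
theorem stmt11 {Ω : Type} [Fintype Ω] {p : ℕ} (hp : 1 ≤ p) {V : Fin p → Type}
    [∀ i, Fintype (V i)] [∀ i, DecidableEq (V i)]
    {U W T : Type} [Fintype U] [DecidableEq U] [Fintype W] [DecidableEq W]
    [Fintype T] [DecidableEq T]
    (μ : Ω → ℝ) (hμ0 : ∀ ω, 0 ≤ μ ω) (hμ1 : ∑ ω, μ ω = 1)
    (X : ∀ i, Ω → V i) (C : Ω → U) (R' : Ω → W)
    (hindep : ∀ (a : ∀ i, V i) (c : U) (r : W),
      pdist μ (fun ω => (((fun i => X i ω), C ω), R' ω)) ((a, c), r)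
        = pdist μ (fun ω => ((fun i => X i ω), C ω)) (a, c) * pdist μ R' r)
    (g : V ⟨0, hp⟩ → U → W → T) (C' : Ω → T)
    (hC' : ∀ ω, C' ω = g (X ⟨0, hp⟩ ω) (C ω) (R' ω)) :
    condTotCorr μ X (fun ω => (C ω, C' ω)) ≤ condTotCorr μ X C := by
  obtain rfl : C' = fun ω => g (X ⟨0, hp⟩ ω) (C ω) (R' ω) := funext hC'
  have hind : PdistIndep μ (fun ω => ((fun i => X i ω), C ω)) R' := fun y r => hindep y.1 y.2 r
  refine condTotCorr_pair_le_of_condH_eq μ hμ0 hμ1 X C _ ⟨0, hp⟩ ?_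
  -- given `(X, C)` or `(X ⟨0, hp⟩, C)` alike, `C'` is `g x₀ c` applied to the independent `R'`
  exact (hind.condH_eq hμ0 fun y r => g (y.1 ⟨0, hp⟩) y.2 r).trans
    ((hind.comp_left fun y => (y.1 ⟨0, hp⟩, y.2)).condH_eq hμ0 fun y r => g y.1 y.2 r).symm

end
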